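/- arXiv:1408.4343 — 6 statements merged into one kernel-verified Lean document; each statement's English description precedes it below -/
import Mathlib

section
/- Let $R$ be a commutative ring, $\mathcal{M}$ an $R$-module, $\mathcal{N} \subseteq \mathcal{M}$ a submodule, and $s \in R$. If $k$ is such that $\mathcal{N} : s^\infty = \mathcal{N} : s^k$, then $\mathcal{N} = (\mathcal{N} : s^k) \cap (\mathcal{N} + s^k \mathcal{M})$. -/
open Pointwise

/-- If `N : s^∞ = N : s^k` then `N = (N : s^k) ∩ (N + s^k M)`. -/
theorem submodule_eq_inter_of_saturation_stable (R : Type*) [CommRing R]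
    (M : Type*) [AddCommGroup M] [Module R M]
    (N : Submodule R M) (s : R) (k : ℕ)
    (hstab : ∀ f : M, (∃ j : ℕ, s ^ j • f ∈ N) → s ^ k • f ∈ N) :
    ∀ f : M, f ∈ N ↔ (s ^ k • f ∈ N ∧ f ∈ N ⊔ s ^ k • (⊤ : Submodule R M)) := by
  intro f
  constructor
  · intro hf
    exact ⟨N.smul_mem _ hf, Submodule.mem_sup_left hf⟩
  · rintro ⟨hfk, hsup⟩
    rw [Submodule.mem_sup] at hsup
    obtain ⟨n, hn, z, hz, hfz⟩ := hsup
    rw [← SetLike.mem_coe, Submodule.coe_pointwise_smul] at hz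
    obtain ⟨m, -, rfl⟩ := hz
    have h2k : s ^ (k + k) • m ∈ N := by
      have : s ^ (k + k) • m = s ^ k • f - s ^ k • n := by
        rw [← hfz, smul_add, smul_smul, ← pow_add]
        abel
      rw [this]
      exact N.sub_mem hfk (N.smul_mem _ hn)
    have hkm : s ^ k • m ∈ N := hstab m ⟨k + k, h2k⟩
    rw [← hfz]
    exact N.add_mem hn hkm
end

section
/- Let $R$ be a commutative ring, $\mathcal{M}$ an $R$-module, $\mathcal{N} \subseteq \mathcal{M}$ a submodule, and $s, t \in R$. If $(\mathcal{N} : s^\infty) : t^\infty = \mathcal{M}$, then $(\mathcal{N} + s^k \mathcal{M}) : t^\infty = \mathcal{N} : t^\infty$ for every $k$ with $\mathcal{N} : s^\infty = \mathcal{N} : s^k$. -/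
open Pointwise

/-- If `(N : s^∞) : t^∞ = M`, then `(N + s^k M) : t^∞ = N : t^∞` for every `k`
with `N : s^∞ = N : s^k`. -/
theorem saturation_add_power_eq (R : Type*) [CommRing R]
    (M : Type*) [AddCommGroup M] [Module R M]
    (N : Submodule R M) (s t : R)
    (hfull : ∀ f : M, ∃ j k : ℕ, s ^ k • t ^ j • f ∈ N) :
    ∀ k : ℕ, (∀ f : M, (∃ j : ℕ, s ^ j • f ∈ N) ↔ s ^ k • f ∈ N) →
      ∀ f : M, (∃ j : ℕ, t ^ j • f ∈ N ⊔ s ^ k • (⊤ : Submodule R M)) ↔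
        (∃ j : ℕ, t ^ j • f ∈ N) := by
  intro k hk f
  constructor
  · rintro ⟨j, hj⟩
    rw [Submodule.mem_sup] at hj
    obtain ⟨n, hn, z, hz, hsum⟩ := hj
    obtain ⟨m, -, rfl⟩ := Set.mem_smul_set.mp hz
    obtain ⟨j', k', hm⟩ := hfull m
    have hm' : s ^ k • t ^ j' • m ∈ N := (hk (t ^ j' • m)).1 ⟨k', hm⟩
    refine ⟨j + j', ?_⟩
    have : t ^ (j + j') • f = t ^ j' • n + s ^ k • t ^ j' • m := by
      rw [smul_comm (s ^ k) (t ^ j'), ← smul_add, hsum, pow_add, mul_comm, mul_smul]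
    rw [this]
    exact N.add_mem (N.smul_mem _ hn) hm'
  · rintro ⟨j, hj⟩
    exact ⟨j, Submodule.mem_sup_left hj⟩
end

section
/- Let $I \subseteq \mathbb{Z}[x_1, \ldots, x_n]$ be an ideal with $I \cap \mathbb{Z} = \langle a \rangle$ for some nonzero integer $a$, let $p$ be a prime dividing $a$, and let $\pi : \mathbb{Z}[x_1,\ldots,x_n] \to \mathbb{F}_p[x_1,\ldots,x_n]$ be reduction mod $p$. If $\bar{P}$ is a minimal prime over $\pi(I)\mathbb{F}_p[x]$, then $\pi^{-1}(\bar{P})$ is a minimal prime over $I$. -/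
open MvPolynomial

/-- If `I ∩ ℤ = ⟨a⟩` with `a ≠ 0` and `p` a prime dividing `a`, then preimages of
minimal primes of the reduction of `I` mod `p` are minimal primes of `I`. -/
theorem minimal_prime_of_reduction (n : ℕ) (I : Ideal (MvPolynomial (Fin n) ℤ))
    (a : ℤ) (ha : a ≠ 0) (hI : I.comap (C : ℤ →+* MvPolynomial (Fin n) ℤ) = Ideal.span {a})
    (p : ℕ) (hp : p.Prime) (hpa : (p : ℤ) ∣ a)
    (Pbar : Ideal (MvPolynomial (Fin n) (ZMod p)))
    (hPbar : Pbar ∈ (I.map (MvPolynomial.map (Int.castRingHom (ZMod p)))).minimalPrimes) :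
    Pbar.comap (MvPolynomial.map (Int.castRingHom (ZMod p))) ∈ I.minimalPrimes := by
  set π : MvPolynomial (Fin n) ℤ →+* MvPolynomial (Fin n) (ZMod p) :=
    MvPolynomial.map (Int.castRingHom (ZMod p)) with hπ
  have hsurj : Function.Surjective π := MvPolynomial.map_surjective _ ZMod.intCast_surjective
  have hker : RingHom.ker π = Ideal.map (C : ℤ →+* MvPolynomial (Fin n) ℤ)
      (Ideal.span {(p : ℤ)}) := by
    rw [hπ, MvPolynomial.ker_map, ZMod.ker_intCastRingHom]
  obtain ⟨⟨hPprime, hPle⟩, hPmin⟩ := hPbar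
  haveI := hPprime
  have hprime : (Pbar.comap π).IsPrime := Ideal.IsPrime.comap π
  have hIle : I ≤ Pbar.comap π := Ideal.map_le_iff_le_comap.mp hPle
  -- `C p ∈ comap π Pbar`
  have hpP : (C (p : ℤ) : MvPolynomial (Fin n) ℤ) ∈ Pbar.comap π := by
    have : (C (p : ℤ) : MvPolynomial (Fin n) ℤ) ∈ RingHom.ker π := by
      rw [hker]
      exact Ideal.mem_map_of_mem _ (Ideal.subset_span rfl)
    rw [Ideal.mem_comap]
    rw [RingHom.mem_ker] at this
    rw [this]
    exact Pbar.zero_mem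
  refine ⟨⟨hprime, hIle⟩, ?_⟩
  rintro Q ⟨hQprime, hIQ⟩ hQle
  haveI := hQprime
  -- Step 1 : `C p ∈ Q`
  have hpQ : (C (p : ℤ) : MvPolynomial (Fin n) ℤ) ∈ Q := by
    have haQ : (C a : MvPolynomial (Fin n) ℤ) ∈ Q := by
      have : (C a : MvPolynomial (Fin n) ℤ) ∈ I := by
        have : a ∈ I.comap (C : ℤ →+* MvPolynomial (Fin n) ℤ) := by
          rw [hI]; exact Ideal.subset_span rfl
        exact this
      exact hIQ this
    -- `J := Q.comap C` is a nonzero prime of ℤ, hence maximal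
    set J : Ideal ℤ := Q.comap (C : ℤ →+* MvPolynomial (Fin n) ℤ) with hJ
    have hJprime : J.IsPrime := Ideal.IsPrime.comap _
    have hJne : J ≠ ⊥ := by
      intro h
      have : a ∈ J := haQ
      rw [h, Ideal.mem_bot] at this
      exact ha this
    have hJmax : J.IsMaximal := hJprime.isMaximal hJne
    set P' : Ideal ℤ := (Pbar.comap π).comap (C : ℤ →+* MvPolynomial (Fin n) ℤ) with hP'
    have hP'prime : P'.IsPrime := Ideal.IsPrime.comap _
    have hJP' : J ≤ P' := fun x hx => hQle hx
    have : J = P' := hJmax.eq_of_le hP'prime.ne_top hJP'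
    have hpJ : (p : ℤ) ∈ J := by rw [this]; exact hpP
    exact hpJ
  -- Step 2 : pass to the quotient
  have hkerQ : RingHom.ker π ≤ Q := by
    rw [hker, Ideal.map_le_iff_le_comap, Ideal.span_le]
    intro x hx
    rw [Set.mem_singleton_iff] at hx
    subst hx
    exact hpQ
  haveI hQbar : (Q.map π).IsPrime := Ideal.map_isPrime_of_surjective hsurj hkerQ
  have h1 : I.map π ≤ Q.map π := Ideal.map_mono hIQ
  have h2 : Q.map π ≤ Pbar := by
    calc Q.map π ≤ (Pbar.comap π).map π := Ideal.map_mono hQle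
    _ = Pbar := Ideal.map_comap_of_surjective π hsurj Pbar
  have h3 : Pbar ≤ Q.map π := hPmin ⟨hQbar, h1⟩ h2
  calc Pbar.comap π ≤ (Q.map π).comap π := Ideal.comap_mono h3
  _ = Q := by
    rw [Ideal.comap_map_of_surjective π hsurj, sup_eq_left]
    intro x hx
    exact hkerQ hx
end

section
/- Let $I \subseteq \mathbb{Z}[x_1,\ldots,x_n]$ be an ideal and $h \in \mathbb{Z}$ a nonzero integer such that $I\mathbb{Q}[x] \cap \mathbb{Z}[x] = I : h^\infty = I : h$. Then $I = (I : h) \cap (I + \langle h \rangle)$. -/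
open MvPolynomial

/-- If `I ℚ[x] ∩ ℤ[x] = I : h^∞ = I : h` for a nonzero integer `h`,
then `I = (I : h) ∩ (I + ⟨h⟩)`. -/
theorem ideal_splitting_by_integer (n : ℕ) (I : Ideal (MvPolynomial (Fin n) ℤ))
    (h : ℤ) (hh : h ≠ 0)
    (hcontr : (I.map (MvPolynomial.map (Int.castRingHom ℚ))).comap
        (MvPolynomial.map (Int.castRingHom ℚ)) =
      I.colon (Ideal.span {(C h : MvPolynomial (Fin n) ℤ)}))
    (hsat : ∀ f : MvPolynomial (Fin n) ℤ,
      (∃ k : ℕ, (C h : MvPolynomial (Fin n) ℤ) ^ k * f ∈ I) ↔ (C h : MvPolynomial (Fin n) ℤ) * f ∈ I) :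
    I = I.colon (Ideal.span {(C h : MvPolynomial (Fin n) ℤ)}) ⊓
      (I ⊔ Ideal.span {(C h : MvPolynomial (Fin n) ℤ)}) := by
  apply le_antisymm
  · refine le_inf ?_ le_sup_left
    intro f hf
    exact Submodule.mem_colon.mpr fun p _ => I.mul_mem_right p hf
  · rintro f ⟨hf1, hf2⟩
    have hf1' : (C h : MvPolynomial (Fin n) ℤ) * f ∈ I := by
      have := Submodule.mem_colon.mp hf1 (C h) (Ideal.subset_span rfl)
      rwa [smul_eq_mul, mul_comm] at this
    obtain ⟨g, hg, r, hr, rfl⟩ := Submodule.mem_sup.mp hf2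
    obtain ⟨q, rfl⟩ := Ideal.mem_span_singleton'.mp hr
    have h2 : (C h : MvPolynomial (Fin n) ℤ) ^ 2 * q ∈ I := by
      have : C h * (g + q * C h) - C h * g = (C h : MvPolynomial (Fin n) ℤ) ^ 2 * q := by ring
      rw [← this]
      exact I.sub_mem hf1' (I.mul_mem_left _ hg)
    have hq : (C h : MvPolynomial (Fin n) ℤ) * q ∈ I := (hsat q).mp ⟨2, h2⟩
    have : q * C h ∈ I := by rwa [mul_comm] at hq
    exact I.add_mem hg this
end

section
/- Let $\mathcal{N}$ be a proper submodule of a finitely generated module $\mathcal{M}$ over a Noetherian commutative ring $R$, let $P_1, \ldots, P_r$ be the minimal primes over $I = \mathrm{Ann}(\mathcal{M}/\mathcal{N})$ with $r \geq 2$, and let $s_1, \ldots, s_r$ be a system of separators ($s_i \notin P_i$, $s_i \in P_j$ for $j \neq i$). Set $Q_i = \mathcal{N} : s_i^\infty$ and choose $k_i$ with $Q_i = \mathcal{N} : s_i^{k_i}$. Then $\mathcal{N} = Q_1 \cap \cdots \cap Q_r \cap (\mathcal{N} + \langle s_1^{k_1}, \ldots, s_r^{k_r}\rangle \mathcal{M})$.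 -/
/-!
Write `Qᵢ = N : sᵢ^{kᵢ}` and `Tᵢ = sᵢ^{kᵢ} M`. For `i ≠ j` the product `sᵢ sⱼ` lies in every
minimal prime of `Ann(M/N)`, hence in its radical, and this forces `Tⱼ ≤ Qᵢ`; moreover
`Qᵢ ⊓ Tᵢ ≤ N` because `kᵢ` stabilises the saturation. In the modular lattice of submodules these
two facts peel the summands `Tᵢ` off `N ⊔ ⨆ Tᵢ` one at a time once we intersect with `⨅ Qᵢ`.
-/

open Pointwise

theorem iInf_inf_sup_iSup_le_of_isModularLattice {α ι : Type*} [CompleteLattice α]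
    [IsModularLattice α] [Fintype ι] {n : α} {q t : ι → α} (hn : ∀ i, n ≤ q i)
    (htq : ∀ i j, j ≠ i → t j ≤ q i) (hqt : ∀ i, q i ⊓ t i ≤ n) :
    (⨅ i, q i) ⊓ (n ⊔ ⨆ i, t i) ≤ n := by
  classical
  suffices h : ∀ S : Finset ι, (⨅ i, q i) ⊓ (n ⊔ S.sup t) ≤ n by
    simpa [Finset.sup_univ_eq_iSup] using h Finset.univ
  intro S
  induction S using Finset.induction_on with
  | empty => simp
  | @insert i S hi ih =>
    set A := n ⊔ S.sup t
    have hA : A ≤ q i :=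
      sup_le (hn i) (Finset.sup_le fun j hj => htq i j (ne_of_mem_of_not_mem hj hi))
    calc (⨅ i, q i) ⊓ (n ⊔ (insert i S).sup t)
        = (⨅ i, q i) ⊓ ((A ⊔ t i) ⊓ q i) := by
          rw [Finset.sup_insert, sup_left_comm, sup_comm (t i), inf_comm _ (q i), ← inf_assoc,
            inf_eq_left.mpr (iInf_le q i)]
      _ = (⨅ i, q i) ⊓ (A ⊔ t i ⊓ q i) := by rw [sup_inf_assoc_of_le _ hA]
      _ ≤ (⨅ i, q i) ⊓ A := by
          gcongr
          exact sup_le le_rfl (le_sup_of_le_left (inf_comm (q i) (t i) ▸ hqt i))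
      _ ≤ n := ih

theorem Ideal.mul_mem_radical_of_separators {R ι : Type*} [CommRing R] {I : Ideal R}
    {P : ι → Ideal R} (hall : ∀ Q ∈ I.minimalPrimes, ∃ i, Q = P i) {s : ι → R}
    (hsep : ∀ i j, j ≠ i → s i ∈ P j) {i j : ι} (hij : j ≠ i) : s i * s j ∈ I.radical := by
  rw [← Ideal.sInf_minimalPrimes, Ideal.mem_sInf]
  intro Q hQ
  obtain ⟨l, rfl⟩ := hall Q hQ
  by_cases hl : l = i
  · subst hl
    exact Ideal.mul_mem_left _ _ (hsep j l (Ne.symm hij))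
  · exact Ideal.mul_mem_right _ _ (hsep i l hl)

namespace Submodule

variable {R M : Type*} [CommRing R] [AddCommGroup M] [Module R M] {N : Submodule R M}

theorem pow_smul_top_le_comap_lsmul_pow {a b : R} {ka kb : ℕ}
    (hab : a * b ∈ (N.colon ⊤).radical)
    (ha : ∀ (j : ℕ) (f : M), a ^ j • f ∈ N → a ^ ka • f ∈ N)
    (hb : ∀ (j : ℕ) (f : M), b ^ j • f ∈ N → b ^ kb • f ∈ N) :
    b ^ kb • (⊤ : Submodule R M) ≤ N.comap (LinearMap.lsmul R M (a ^ ka)) := by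
  obtain ⟨n, hn⟩ := hab
  rintro _ ⟨m, -, rfl⟩
  have hbn : b ^ n • a ^ n • m ∈ N := by
    simpa [mul_pow, mul_smul, smul_comm (a ^ n)] using mem_colon.mp hn m trivial
  have hbk : a ^ n • b ^ kb • m ∈ N := by
    simpa [smul_comm (a ^ n)] using hb n _ hbn
  simpa [smul_comm (a ^ ka)] using ha n _ hbk

theorem comap_lsmul_pow_inf_pow_smul_top_le {a : R} {k : ℕ}
    (ha : ∀ (j : ℕ) (f : M), a ^ j • f ∈ N → a ^ k • f ∈ N) :
    N.comap (LinearMap.lsmul R M (a ^ k)) ⊓ a ^ k • (⊤ : Submodule R M) ≤ N := by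
  rintro _ ⟨hmem, m, -, rfl⟩
  have h : a ^ (k + k) • m ∈ N := by simpa [pow_add, mul_smul] using hmem
  simpa using ha _ m h

theorem le_comap_lsmul (a : R) : N ≤ N.comap (LinearMap.lsmul R M a) :=
  fun _ hx => N.smul_mem a hx

end Submodule

theorem pseudo_primary_decomposition_general (R : Type*) [CommRing R]
    (M : Type*) [AddCommGroup M] [Module R M]
    (N : Submodule R M)
    (r : ℕ) (P : Fin r → Ideal R)
    (hall : ∀ Q ∈ (N.colon ⊤).minimalPrimes, ∃ i, Q = P i)
    (s : Fin r → R) (hsep : ∀ i, s i ∉ P i ∧ ∀ j, j ≠ i → s i ∈ P j)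
    (k : Fin r → ℕ)
    (hk : ∀ i, ∀ f : M, (∃ j : ℕ, s i ^ j • f ∈ N) ↔ s i ^ k i • f ∈ N) :
    N = (⨅ i, N.comap (LinearMap.lsmul R M (s i ^ k i))) ⊓
        (N ⊔ ⨆ i, s i ^ k i • (⊤ : Submodule R M)) := by
  have hsat : ∀ i (j : ℕ) (f : M), s i ^ j • f ∈ N → s i ^ k i • f ∈ N :=
    fun i j f h => (hk i f).mp ⟨j, h⟩
  refine le_antisymm (le_inf (le_iInf fun i => N.le_comap_lsmul _) le_sup_left) ?_
  refine iInf_inf_sup_iSup_le_of_isModularLattice (fun i => N.le_comap_lsmul _)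
    (fun i j hij => ?_) (fun i => Submodule.comap_lsmul_pow_inf_pow_smul_top_le (hsat i))
  exact Submodule.pow_smul_top_le_comap_lsmul_pow
    (Ideal.mul_mem_radical_of_separators hall (fun i => (hsep i).2) hij) (hsat i) (hsat j)

/-- Pseudo-primary decomposition (module version, Shimoyama–Yokoyama). -/
theorem pseudo_primary_decomposition (R : Type*) [CommRing R] [IsNoetherianRing R]
    (M : Type*) [AddCommGroup M] [Module R M] [Module.Finite R M]
    (N : Submodule R M) (hN : N ≠ ⊤)
    (r : ℕ) (hr : 2 ≤ r) (P : Fin r → Ideal R)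
    (hmin : ∀ i, P i ∈ (N.colon ⊤).minimalPrimes)
    (hall : ∀ Q ∈ (N.colon ⊤).minimalPrimes, ∃ i, Q = P i)
    (s : Fin r → R) (hsep : ∀ i, s i ∉ P i ∧ ∀ j, j ≠ i → s i ∈ P j)
    (k : Fin r → ℕ)
    (hk : ∀ i, ∀ f : M, (∃ j : ℕ, s i ^ j • f ∈ N) ↔ s i ^ k i • f ∈ N) :
    N = (⨅ i, N.comap (LinearMap.lsmul R M (s i ^ k i))) ⊓
        (N ⊔ ⨆ i, s i ^ k i • (⊤ : Submodule R M)) :=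
  pseudo_primary_decomposition_general R M N r P hall s hsep k hk
end

section
/- Under the hypotheses of the pseudo-primary decomposition lemma, each $Q_i = \mathcal{N} : s_i^\infty$ satisfies $Q_i : s_j^\infty = \mathcal{M}$ for every $j \neq i$. -/
/-! Every minimal prime over `N : M` is some `P k`, and `s i * s j` lies in each `P k`; so
`s i * s j` lies in the radical of `N : M`, and one of its powers carries all of `M` into `N`. -/

theorem Ideal.mem_radical_of_forall_mem_minimalPrimes {R : Type*} [CommSemiring R]
    {I : Ideal R} {x : R} (h : ∀ p ∈ I.minimalPrimes, x ∈ p) : x ∈ I.radical := by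
  rw [← Ideal.sInf_minimalPrimes]
  exact Ideal.mem_sInf.2 h

theorem mul_mem_of_separators {ι R : Type*} [CommSemiring R] {P : ι → Ideal R} {s : ι → R}
    (hsep : ∀ i j, j ≠ i → s i ∈ P j) {i j : ι} (hij : i ≠ j) (k : ι) : s i * s j ∈ P k := by
  rcases eq_or_ne k i with rfl | hki
  · exact Ideal.mul_mem_left _ _ (hsep j k hij)
  · exact Ideal.mul_mem_right _ _ (hsep i k hki)

theorem Submodule.exists_pow_smul_mem_of_mem_radical_colon {R M : Type*} [CommSemiring R]
    [AddCommMonoid M] [Module R M] {N : Submodule R M} {x : R}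
    (hx : x ∈ (N.colon ⊤).radical) : ∃ n : ℕ, ∀ f : M, x ^ n • f ∈ N := by
  obtain ⟨n, hn⟩ := hx
  exact ⟨n, fun f => Submodule.mem_colon.1 hn f trivial⟩

theorem pseudo_primary_components_saturate_general (R : Type*) [CommRing R]
    (M : Type*) [AddCommGroup M] [Module R M]
    (N : Submodule R M)
    (r : ℕ) (P : Fin r → Ideal R)
    (hall : ∀ Q ∈ (N.colon ⊤).minimalPrimes, ∃ i, Q = P i)
    (s : Fin r → R) (hsep : ∀ i, s i ∉ P i ∧ ∀ j, j ≠ i → s i ∈ P j) :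
    ∀ i j, i ≠ j → ∀ f : M, ∃ a b : ℕ, s i ^ b • s j ^ a • f ∈ N := by
  intro i j hij f
  have hrad : s i * s j ∈ (N.colon ⊤).radical := by
    refine Ideal.mem_radical_of_forall_mem_minimalPrimes fun p hp => ?_
    obtain ⟨k, rfl⟩ := hall p hp
    exact mul_mem_of_separators (fun i => (hsep i).2) hij k
  obtain ⟨n, hn⟩ := Submodule.exists_pow_smul_mem_of_mem_radical_colon hrad
  refine ⟨n, n, ?_⟩
  simpa only [mul_pow, mul_smul] using hn f

/-- Under the hypotheses of the pseudo-primary decomposition lemma,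
`Q_i : s_j^∞ = M` for `j ≠ i`, where `Q_i = N : s_i^∞`. -/
theorem pseudo_primary_components_saturate (R : Type*) [CommRing R] [IsNoetherianRing R]
    (M : Type*) [AddCommGroup M] [Module R M] [Module.Finite R M]
    (N : Submodule R M) (hN : N ≠ ⊤)
    (r : ℕ) (hr : 2 ≤ r) (P : Fin r → Ideal R)
    (hmin : ∀ i, P i ∈ (N.colon ⊤).minimalPrimes)
    (hall : ∀ Q ∈ (N.colon ⊤).minimalPrimes, ∃ i, Q = P i)
    (s : Fin r → R) (hsep : ∀ i, s i ∉ P i ∧ ∀ j, j ≠ i → s i ∈ P j) :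
    ∀ i j, i ≠ j → ∀ f : M, ∃ a b : ℕ, s i ^ b • s j ^ a • f ∈ N :=
  pseudo_primary_components_saturate_general R M N r P hall s hsep
end
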